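/- Let n be a positive integer, let 1 ≥ a_1 ≥ a_2 ≥ ⋯ ≥ a_n > 0 be a nonincreasing sequence of real numbers, and define s_0 = 0 and, recursively for i ≥ 1, k_i = min{ k ≥ 1 : s_{i-1} + k ≤ n and a_{s_{i-1}+k} > 2^{1−k} } and s_i = s_{i-1} + k_i, with m the largest index for which this minimum exists. For any 1 ≤ r ≤ m, let f : {0,1}^n → {0,1} be the tribes function f(x) = ⋁_{i=1}^{r} ⋀_{j=1}^{k_i} x_{s_{i-1}+j}. Then Inf_j[f] < a_j for every 1 ≤ j ≤ n. -/

import Mathlib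

/-- The `j`-th coordinate of `x ∈ {0,1}^n`, with coordinates numbered `1, …, n`
(out-of-range coordinates default to `false`). -/
def coord {n : ℕ} (x : Fin n → Bool) (j : ℕ) : Bool :=
  if h : j - 1 < n then x ⟨j - 1, h⟩ else false

/-- The tribes function with tribe sizes `k_1, …, k_r`:
`f(x) = ⋁_{i=1}^r ⋀_{j=1}^{k_i} x_{s_{i-1}+j}` where `s_i = k_1 + ⋯ + k_i`. -/
noncomputable def tribesFn (n r : ℕ) (k : ℕ → ℕ) : (Fin n → Bool) → Bool := fun x =>
  (Finset.Icc 1 r).sup fun i => (Finset.Icc 1 (k i)).inf fun j =>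
    coord x ((∑ l ∈ Finset.Icc 1 (i - 1), k l) + j)

/-- The vector `x` with the coordinate `j` flipped. -/
def flipCoord (n : ℕ) (j : Fin n) (x : Fin n → Bool) : Fin n → Bool :=
  Function.update x j (!x j)

/-- The influence `Inf_j[f] = Pr[f(x) ≠ f(x^j)]` of the `j`-th variable on `f`,
for a uniformly random `x ∈ {0,1}^n`. -/
noncomputable def influence (n : ℕ) (f : (Fin n → Bool) → Bool) (j : Fin n) : ℝ :=
  ((Finset.univ.filter fun x : Fin n → Bool => f x ≠ f (flipCoord n j x)).card : ℝ) / 2 ^ n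

/-! The tribes are consecutive blocks of coordinates. Flipping a coordinate outside every tribe
never changes `f`. Flipping a coordinate `j` of tribe `i` can change `f` only when the other
`k_i - 1` coordinates of that tribe are all `1`, so `Inf_j[f] ≤ 2^{1-k_i}`; the greedy choice of
`k_i` gives `2^{1-k_i} < a_{s_i} ≤ a_j`, since `j ≤ s_i` and `a` is nonincreasing. -/

theorem card_filter_forall_mem_eq_true (n : ℕ) (T : Finset (Fin n)) :
    (Finset.univ.filter fun x : Fin n → Bool => ∀ q ∈ T, x q = true).card = 2 ^ (n - T.card) := by
  have : (Finset.univ.filter fun x : Fin n → Bool => ∀ q ∈ T, x q = true)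
      = Fintype.piFinset fun q => if q ∈ T then {true} else Finset.univ := by
    ext x
    simp only [Finset.mem_filter, Finset.mem_univ, true_and, Fintype.mem_piFinset]
    refine ⟨fun h q => ?_, fun h q hq => by simpa [hq] using h q⟩
    split_ifs with hq <;> simp [h q, *]
  rw [this, Fintype.card_piFinset]
  have hcompl : (Finset.univ.filter fun q => q ∉ T) = Tᶜ := by ext; simp
  simp [apply_ite Finset.card, Finset.prod_ite, hcompl, Finset.card_compl]

theorem card_filter_val_mem_Ico {n : ℕ} {lo hi : ℕ} (hhi : hi ≤ n) :
    (Finset.univ.filter fun q : Fin n => lo ≤ (q : ℕ) ∧ (q : ℕ) < hi).card = hi - lo := by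
  rw [← Nat.card_Ico, ← Finset.card_map Fin.valEmbedding]
  congr 1
  ext m
  simp only [Finset.mem_map, Finset.mem_filter, Finset.mem_univ, true_and, Fin.valEmbedding_apply,
    Finset.mem_Ico]
  exact ⟨fun ⟨q, hq, hqm⟩ => hqm ▸ hq, fun hm => ⟨⟨m, by omega⟩, hm, rfl⟩⟩

theorem antitoneOn_Icc_of_succ_le {α : Type*} [Preorder α] {f : ℕ → α} {lo hi : ℕ}
    (hf : ∀ j, lo ≤ j → j < hi → f (j + 1) ≤ f j) : AntitoneOn f (Set.Icc lo hi) := by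
  intro p hp q hq hpq
  have step : ∀ j, lo ≤ j → f (min (j + 1) hi) ≤ f (min j hi) := by
    intro j hj
    rcases lt_or_ge j hi with h | h
    · rw [min_eq_left (by omega), min_eq_left h.le]; exact hf j hj h
    · rw [min_eq_right (by omega), min_eq_right h]
  simpa [min_eq_left hp.2, min_eq_left hq.2] using
    Nat.rel_of_forall_rel_succ_of_le_of_le (β := αᵒᵈ) (· ≤ ·)
      (f := fun j => OrderDual.toDual (f (min j hi))) step hp.1 hpq

theorem exists_lt_le_of_le {s : ℕ → ℕ} (hs0 : s 0 = 0) {x r : ℕ} (hx : 0 < x) (hxr : x ≤ s r) :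
    ∃ i, 1 ≤ i ∧ i ≤ r ∧ s (i - 1) < x ∧ x ≤ s i := by
  have hex : ∃ i, x ≤ s i := ⟨r, hxr⟩
  have hi0 : Nat.find hex ≠ 0 := fun h => by have := Nat.find_spec hex; rw [h, hs0] at this; omega
  refine ⟨Nat.find hex, by omega, Nat.find_min' hex hxr, ?_, Nat.find_spec hex⟩
  exact lt_of_not_ge (Nat.find_min hex (by omega))

theorem influence_eq_zero_of_forall_flipCoord_eq {n : ℕ} {f : (Fin n → Bool) → Bool} {j : Fin n}
    (h : ∀ x, f (flipCoord n j x) = f x) : influence n f j = 0 := by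
  simp [influence, h]

theorem influence_le_of_forall_mem_eq_true {n : ℕ} {f : (Fin n → Bool) → Bool} {j : Fin n}
    (T : Finset (Fin n)) (h : ∀ x, f x ≠ f (flipCoord n j x) → ∀ q ∈ T, x q = true) :
    influence n f j ≤ (2 : ℝ) ^ (-(T.card : ℤ)) := by
  obtain ⟨d, hd⟩ := Nat.exists_eq_add_of_le (by simpa using T.card_le_univ : T.card ≤ n)
  have hcard := Finset.card_le_card (Finset.monotone_filter_right Finset.univ fun x _ => h x)
  rw [card_filter_forall_mem_eq_true, show n - T.card = d by omega] at hcard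
  rw [influence, div_le_iff₀ (by positivity), zpow_neg, zpow_natCast,
    show (2 : ℝ) ^ n = 2 ^ T.card * 2 ^ d by rw [← pow_add, ← hd],
    inv_mul_cancel_left₀ (by positivity)]
  exact_mod_cast hcard

/-- `tribeEnd k i = s_i`: the `i`-th tribe reads the `1`-based coordinates
`s_{i-1} + 1, …, s_{i-1} + k_i`, i.e. the `0`-based coordinates in `[s_{i-1}, s_{i-1} + k_i)`. -/
def tribeEnd (k : ℕ → ℕ) (i : ℕ) : ℕ := ∑ l ∈ Finset.Icc 1 i, k l

noncomputable def tribe (n : ℕ) (k : ℕ → ℕ) (i : ℕ) (x : Fin n → Bool) : Bool :=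
  (Finset.Icc 1 (k i)).inf fun t => coord x (tribeEnd k (i - 1) + t)

theorem tribesFn_eq_sup (n r : ℕ) (k : ℕ → ℕ) (x : Fin n → Bool) :
    tribesFn n r k x = (Finset.Icc 1 r).sup fun i => tribe n k i x := rfl

theorem tribeEnd_sub_one_add {k : ℕ → ℕ} {i : ℕ} (hi : 1 ≤ i) :
    tribeEnd k (i - 1) + k i = tribeEnd k i := by
  obtain ⟨i, rfl⟩ := Nat.exists_eq_add_of_le' hi
  simp [tribeEnd, Finset.sum_Icc_succ_top]

theorem tribeEnd_mono (k : ℕ → ℕ) : Monotone (tribeEnd k) :=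
  fun _ _ h => Finset.sum_le_sum_of_subset (Finset.Icc_subset_Icc_right h)

/-- Stated via `idx - 1` because `coord x 0` also reads the `0`-based coordinate `0`. -/
theorem coord_flipCoord_of_sub_one_ne {n : ℕ} {j : Fin n} (x : Fin n → Bool) {idx : ℕ}
    (h : idx - 1 ≠ j) : coord (flipCoord n j x) idx = coord x idx := by
  unfold coord flipCoord
  split_ifs
  · exact Function.update_of_ne (fun heq => h (congrArg Fin.val heq)) _ _
  · rfl

theorem tribe_flipCoord_of_notMem {n : ℕ} {k : ℕ → ℕ} {i : ℕ} {j : Fin n}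
    (hj : ¬ (tribeEnd k (i - 1) ≤ j ∧ (j : ℕ) < tribeEnd k (i - 1) + k i)) (x : Fin n → Bool) :
    tribe n k i (flipCoord n j x) = tribe n k i x := by
  refine Finset.inf_congr rfl fun t ht => coord_flipCoord_of_sub_one_ne x ?_
  rw [Finset.mem_Icc] at ht
  omega

theorem tribe_eq_false {n : ℕ} {k : ℕ → ℕ} {i : ℕ} {x : Fin n → Bool} (q : Fin n)
    (hq : tribeEnd k (i - 1) ≤ q ∧ (q : ℕ) < tribeEnd k (i - 1) + k i) (hx : x q = false) :
    tribe n k i x = false := by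
  have ht : (q : ℕ) + 1 - tribeEnd k (i - 1) ∈ Finset.Icc 1 (k i) := by
    rw [Finset.mem_Icc]; omega
  have hcoord : coord x (tribeEnd k (i - 1) + ((q : ℕ) + 1 - tribeEnd k (i - 1))) = false := by
    rw [coord, dif_pos (by omega)]
    convert hx using 3
    omega
  exact le_bot_iff.mp
    ((Finset.inf_le (f := fun t => coord x (tribeEnd k (i - 1) + t)) ht).trans_eq hcoord)

theorem tribesFn_flipCoord_of_tribeEnd_le {n r : ℕ} {k : ℕ → ℕ} {j : Fin n}
    (hj : tribeEnd k r ≤ j) (x : Fin n → Bool) :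
    tribesFn n r k (flipCoord n j x) = tribesFn n r k x := by
  rw [tribesFn_eq_sup, tribesFn_eq_sup]
  refine Finset.sup_congr rfl fun i hi => tribe_flipCoord_of_notMem ?_ x
  rw [Finset.mem_Icc] at hi
  have := tribeEnd_mono k hi.2
  rw [tribeEnd_sub_one_add hi.1]
  omega

theorem eq_true_of_tribesFn_flipCoord_ne {n r : ℕ} {k : ℕ → ℕ} {i : ℕ} {j q : Fin n}
    {x : Fin n → Bool} (hi : i ∈ Finset.Icc 1 r)
    (hj : tribeEnd k (i - 1) ≤ j ∧ (j : ℕ) < tribeEnd k i)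
    (hq : tribeEnd k (i - 1) ≤ q ∧ (q : ℕ) < tribeEnd k i) (hqj : q ≠ j)
    (hx : tribesFn n r k x ≠ tribesFn n r k (flipCoord n j x)) : x q = true := by
  rw [← Bool.not_eq_false]
  intro hxq
  rw [tribesFn_eq_sup, tribesFn_eq_sup] at hx
  refine hx (Finset.sup_congr rfl fun i' hi' => ?_).symm
  rw [Finset.mem_Icc] at hi hi'
  have hend := tribeEnd_sub_one_add (k := k) hi.1
  have hend' := tribeEnd_sub_one_add (k := k) hi'.1
  obtain rfl | hne := eq_or_ne i' i
  · have hq' : tribeEnd k (i' - 1) ≤ q ∧ (q : ℕ) < tribeEnd k (i' - 1) + k i' := by omega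
    have hflip : flipCoord n j x q = false := by rwa [flipCoord, Function.update_of_ne hqj]
    rw [tribe_eq_false q hq' hxq, tribe_eq_false q hq' hflip]
  · refine tribe_flipCoord_of_notMem ?_ x
    rcases hne.lt_or_gt with h | h
    · have := tribeEnd_mono k (show i' ≤ i - 1 by omega)
      omega
    · have := tribeEnd_mono k (show i ≤ i' - 1 by omega)
      omega

theorem influence_tribesFn_le {n r : ℕ} {k : ℕ → ℕ} {i : ℕ} {j : Fin n} (hi : i ∈ Finset.Icc 1 r)
    (hj : tribeEnd k (i - 1) ≤ j ∧ (j : ℕ) < tribeEnd k i) (hn : tribeEnd k i ≤ n) :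
    influence n (tribesFn n r k) j ≤ (2 : ℝ) ^ (1 - (k i : ℤ)) := by
  set B := Finset.univ.filter fun q : Fin n => tribeEnd k (i - 1) ≤ q ∧ (q : ℕ) < tribeEnd k i
  have hjB : j ∈ B := by simpa [B] using hj
  have hcard : ((B.erase j).card : ℤ) = k i - 1 := by
    have := tribeEnd_sub_one_add (k := k) (Finset.mem_Icc.1 hi).1
    rw [Finset.card_erase_of_mem hjB, card_filter_val_mem_Ico hn]
    omega
  have := influence_le_of_forall_mem_eq_true (B.erase j) fun x hx q hq =>
    eq_true_of_tribesFn_flipCoord_ne hi hj (by simpa [B] using (Finset.mem_erase.1 hq).2)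
      (Finset.mem_erase.1 hq).1 hx
  rwa [hcard, neg_sub] at this

theorem eq_tribeEnd_of_eq_add {m : ℕ} {k s : ℕ → ℕ} (hs0 : s 0 = 0)
    (hs : ∀ i, 1 ≤ i → i ≤ m → s i = s (i - 1) + k i) : ∀ i ≤ m, s i = tribeEnd k i := by
  intro i
  induction i with
  | zero => intro _; simp [hs0, tribeEnd]
  | succ i ih =>
    intro hi
    rw [hs (i + 1) (by omega) hi, ← tribeEnd_sub_one_add (by omega), Nat.add_sub_cancel,
      ih (by omega)]

theorem tribes_influence_lt_general (n : ℕ) (a : ℕ → ℝ)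
    (ha : ∀ j, 1 ≤ j → j ≤ n → 0 < a j ∧ a j ≤ 1)
    (hmono : ∀ j, 1 ≤ j → j < n → a (j + 1) ≤ a j)
    (m : ℕ) (k s : ℕ → ℕ) (hs0 : s 0 = 0)
    (hk : ∀ i, 1 ≤ i → i ≤ m →
      IsLeast {t : ℕ | 1 ≤ t ∧ s (i - 1) + t ≤ n ∧
        (2 : ℝ) ^ (1 - (t : ℤ)) < a (s (i - 1) + t)} (k i))
    (hs : ∀ i, 1 ≤ i → i ≤ m → s i = s (i - 1) + k i)
    (r : ℕ) (hrm : r ≤ m) :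
    ∀ j : Fin n, influence n (tribesFn n r k) j < a ((j : ℕ) + 1) := by
  intro j
  have hs_end := eq_tribeEnd_of_eq_add hs0 hs
  rcases le_or_gt (s r) j with hjr | hjr
  · rw [influence_eq_zero_of_forall_flipCoord_eq
      (tribesFn_flipCoord_of_tribeEnd_le (hs_end r hrm ▸ hjr))]
    exact (ha _ (by omega) (by omega)).1
  · obtain ⟨i, hi1, hir, hlo, hhi⟩ := exists_lt_le_of_le hs0 (Nat.succ_pos j) hjr
    have him : i ≤ m := hir.trans hrm
    obtain ⟨⟨-, hkn, hka⟩, -⟩ := hk i hi1 him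
    rw [← hs i hi1 him] at hkn hka
    have hj : tribeEnd k (i - 1) ≤ j ∧ (j : ℕ) < tribeEnd k i := by
      rw [← hs_end i him, ← hs_end (i - 1) (by omega)]
      omega
    calc influence n (tribesFn n r k) j ≤ (2 : ℝ) ^ (1 - (k i : ℤ)) :=
          influence_tribesFn_le (Finset.mem_Icc.2 ⟨hi1, hir⟩) hj (hs_end i him ▸ hkn)
      _ < a (s i) := hka
      _ ≤ a (j + 1) := antitoneOn_Icc_of_succ_le hmono ⟨by omega, by omega⟩ ⟨by omega, hkn⟩ hhi

/-- **The tribes function built from the greedy tribe sizes has small influences.**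
Let `1 ≥ a_1 ≥ ⋯ ≥ a_n > 0`. With `s_0 = 0`,
`k_i = min{ k ≥ 1 : s_{i-1} + k ≤ n and a_{s_{i-1}+k} > 2^{1-k} }`, `s_i = s_{i-1} + k_i`,
and `m` the largest index for which this minimum exists, for any `1 ≤ r ≤ m` the tribes
function `f` with tribe sizes `k_1, …, k_r` satisfies `Inf_j[f] < a_j` for all `1 ≤ j ≤ n`
(below `j : Fin n` is a `0`-based coordinate, so its `1`-based index is `j + 1`). -/
theorem tribes_influence_lt (n : ℕ) (hn : 1 ≤ n) (a : ℕ → ℝ)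
    (ha : ∀ j, 1 ≤ j → j ≤ n → 0 < a j ∧ a j ≤ 1)
    (hmono : ∀ j, 1 ≤ j → j < n → a (j + 1) ≤ a j)
    (m : ℕ) (k s : ℕ → ℕ) (hs0 : s 0 = 0)
    (hk : ∀ i, 1 ≤ i → i ≤ m →
      IsLeast {t : ℕ | 1 ≤ t ∧ s (i - 1) + t ≤ n ∧
        (2 : ℝ) ^ (1 - (t : ℤ)) < a (s (i - 1) + t)} (k i))
    (hs : ∀ i, 1 ≤ i → i ≤ m → s i = s (i - 1) + k i)
    (hm : ¬ ∃ t : ℕ, 1 ≤ t ∧ s m + t ≤ n ∧ (2 : ℝ) ^ (1 - (t : ℤ)) < a (s m + t))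
    (r : ℕ) (hr1 : 1 ≤ r) (hrm : r ≤ m) :
    ∀ j : Fin n, influence n (tribesFn n r k) j < a ((j : ℕ) + 1) :=
  tribes_influence_lt_general n a ha hmono m k s hs0 hk hs r hrm
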